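/- Let φ, ψ ∈ L^∞(𝕋ⁿ). If ψ is an analytic symbol, or if the complex conjugate φ̄ is an analytic symbol, then T_{φ,△ₙ} T_{ψ,△ₙ} = T_{φψ,△ₙ} on H²(∂_d△ₙ). -/

import Mathlib

open MeasureTheory Filter Topology ComplexConjugate

noncomputable section

instance fact_one_pos : Fact ((0:ℝ) < 1) := ⟨one_pos⟩

abbrev Torus (n : ℕ) := Fin n → AddCircle (1 : ℝ)

abbrev L2T (n : ℕ) := Lp ℂ 2 (volume : Measure (Torus n))

abbrev LinfT (n : ℕ) := Lp ℂ ⊤ (volume : Measure (Torus n))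

def char {n : ℕ} (α : Fin n → ℤ) : Torus n → ℂ := fun x => ∏ j, fourier (α j) (x j)

lemma char_continuous {n : ℕ} (α : Fin n → ℤ) : Continuous (char α) :=
  continuous_finsetProd _ fun j _ => (fourier (α j)).continuous.comp (continuous_apply j)

lemma char_memLp {n : ℕ} (α : Fin n → ℤ) (p : ENNReal) :
    MemLp (char α) p (volume : Measure (Torus n)) := by
  refine (memLp_top_of_bound ((char_continuous α).aestronglyMeasurable) 1 ?_).mono_exponent le_top
  filter_upwards with x
  simp only [char, norm_prod]
  calc ∏ j, ‖fourier (α j) (x j)‖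
      = ∏ j : Fin n, (1:ℝ) := by
        refine Finset.prod_congr rfl fun j _ => ?_
        rw [fourier_apply]; exact Circle.norm_coe _
    _ ≤ 1 := by simp

def charL2 {n : ℕ} (α : Fin n → ℤ) : L2T n := (char_memLp α 2).toLp (char α)

def hardyT (n : ℕ) : Submodule ℂ (L2T n) :=
  (Submodule.span ℂ
    (charL2 '' {α : Fin n → ℤ | ∀ k : Fin n, 0 ≤ (∑ j ∈ Finset.Iic k, α j) + (k.val : ℤ)})).topologicalClosure

def hardyD (n : ℕ) : Submodule ℂ (L2T n) :=
  (Submodule.span ℂ (charL2 '' {α : Fin n → ℤ | ∀ j, 0 ≤ α j})).topologicalClosure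

instance hardyT.completeSpace (n : ℕ) : CompleteSpace (hardyT n) :=
  (Submodule.isClosed_topologicalClosure _).completeSpace_coe

instance hardyD.completeSpace (n : ℕ) : CompleteSpace (hardyD n) :=
  (Submodule.isClosed_topologicalClosure _).completeSpace_coe

def IsToeplitzOn {n : ℕ} (K : Submodule ℂ (L2T n)) (φ : Torus n → ℂ) (T : K →L[ℂ] K) : Prop :=
  ∀ f g : K,
    (inner ℂ ((g : L2T n)) ((T f : L2T n)) : ℂ) =
      ∫ x, conj ((g : L2T n) x) * (φ x * (f : L2T n) x) ∂volume

def IsCoordMult {n : ℕ} (j : Fin n) (M : hardyT n →L[ℂ] hardyT n) : Prop :=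
  ∀ f : hardyT n,
    ((M f : L2T n) : Torus n → ℂ) =ᵐ[volume]
      fun x => fourier 1 (x j) * ((f : L2T n) : Torus n → ℂ) x

def IsHankelT {n : ℕ} (φ : Torus n → ℂ) (H : hardyT n →L[ℂ] L2T n) : Prop :=
  (∀ f : hardyT n, H f ∈ (hardyT n)ᗮ) ∧
    ∀ f : hardyT n, ∀ g : L2T n, g ∈ (hardyT n)ᗮ →
      (inner ℂ g (H f) : ℂ) = ∫ x, conj (g x) * (φ x * (f : L2T n) x) ∂volume

def IsAnalyticSymbolF {n : ℕ} (φ : Torus n → ℂ) : Prop :=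
  ∀ α : Fin n → ℤ, (¬ ∀ k : Fin n, 0 ≤ ∑ j ∈ Finset.Iic k, α j) →
    ∫ x, φ x * char (-α) x ∂(volume : Measure (Torus n)) = 0

def IsInnerSymbolF {n : ℕ} (φ : Torus n → ℂ) : Prop :=
  IsAnalyticSymbolF φ ∧ ∀ᵐ x ∂(volume : Measure (Torus n)), ‖φ x‖ = 1

def tauMap {n : ℕ} (x : Torus n) : Torus n := fun j => ∑ k ∈ Finset.Ici j, x k

def sigmaMap {n : ℕ} (x : Torus n) : Torus n :=
  fun j => if h : (j : ℕ) + 1 < n then x j - x ⟨(j : ℕ) + 1, h⟩ else x j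

def jacF {n : ℕ} (x : Torus n) : ℂ := ∏ j : Fin n, fourier (j.val : ℤ) (x j)

def jacInvF {n : ℕ} (x : Torus n) : ℂ :=
  ∏ j : Fin n, fourier (if j.val = 0 then (0 : ℤ) else -1) (x j)

/-!
Multiplication by an analytic symbol `χ` maps `H²(∂_d△ₙ)` into itself: for `α ∈ 𝓘` and `β ∉ 𝓘`,
`⟪e_β, χ e_α⟫` is the Fourier coefficient of `χ` at `β - α`, which lies outside `S`. This is
checked against the description `H²(∂_d△ₙ) = {e_β : β ∉ 𝓘}ᗮ`, valid because the characters form a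
Hilbert basis of `L²(𝕋ⁿ)`. So if `ψ` is analytic then `T_ψ f = ψ f` and `T_φ T_ψ f = P(φψf)`; if
`conj φ` is analytic then `⟪g, T_φ T_ψ f⟫ = ⟪conj φ · g, T_ψ f⟫ = ⟪conj φ · g, ψ f⟫ = ⟪g, φψ f⟫`,
since `conj φ · g` stays in `H²(∂_d△ₙ)`.
-/

open Submodule Set UnitAddTorus

section InnerProductSpace

variable {𝕜 E ι : Type*} [RCLike 𝕜] [NormedAddCommGroup E] [InnerProductSpace 𝕜 E]

lemma Submodule.mem_orthogonal_span_iff {S : Set E} {v : E} :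
    v ∈ (span 𝕜 S)ᗮ ↔ ∀ s ∈ S, inner 𝕜 s v = (0 : 𝕜) := by
  rw [← span_singleton_le_iff_mem, ← isOrtho_iff_le, isOrtho_span]
  simp only [mem_singleton_iff, forall_eq]
  exact forall₂_congr fun _ _ => inner_eq_zero_symm

lemma Orthonormal.closure_span_image_eq_orthogonal [CompleteSpace E] {e : ι → E}
    (he : Orthonormal 𝕜 e) (hdense : (span 𝕜 (range e)).topologicalClosure = ⊤) (A : Set ι) :
    (span 𝕜 (e '' A)).topologicalClosure = (span 𝕜 (e '' Aᶜ))ᗮ := by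
  set K := (span 𝕜 (e '' A)).topologicalClosure
  have hKL : K ≤ (span 𝕜 (e '' Aᶜ))ᗮ := by
    refine topologicalClosure_minimal _ ?_ (isClosed_orthogonal _)
    rw [← isOrtho_iff_le, isOrtho_span]
    rintro - ⟨i, hi, rfl⟩ - ⟨j, hj, rfl⟩
    exact he.inner_eq_zero (ne_of_mem_of_not_mem hi hj)
  have hperp : Kᗮ ⊓ (span 𝕜 (e '' Aᶜ))ᗮ = ⊥ := by
    rw [orthogonal_closure, inf_orthogonal, ← span_union, ← image_union, union_compl_self,
      image_univ, ← orthogonal_closure, hdense, top_orthogonal_eq_bot]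
  rw [← sup_orthogonal_inf_of_hasOrthogonalProjection hKL, hperp, sup_bot_eq]

end InnerProductSpace

namespace MeasureTheory.Lp

variable {𝕜 α : Type*} [RCLike 𝕜] [MeasurableSpace α] {μ : Measure α}

lemma inner_smul_right_eq_integral (χ : Lp 𝕜 ⊤ μ) (g h : Lp 𝕜 2 μ) :
    inner 𝕜 g (χ • h : Lp 𝕜 2 μ) = ∫ x, conj (g x) * (χ x * h x) ∂μ := by
  rw [L2.inner_def]
  refine integral_congr_ae ?_
  filter_upwards [coeFn_lpSMul (r := 2) χ h] with x hx
  rw [RCLike.inner_apply', hx, Pi.smul_apply', smul_eq_mul]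

lemma inner_smul_right_eq_inner_star_smul (χ : Lp 𝕜 ⊤ μ) (g h : Lp 𝕜 2 μ) :
    inner 𝕜 g (χ • h : Lp 𝕜 2 μ) = inner 𝕜 (star χ • g : Lp 𝕜 2 μ) h := by
  rw [inner_smul_right_eq_integral, L2.inner_def]
  refine integral_congr_ae ?_
  filter_upwards [coeFn_lpSMul (r := 2) (star χ) g, coeFn_star χ] with x hx hχ
  rw [RCLike.inner_apply', hx, Pi.smul_apply', hχ, Pi.star_apply, smul_eq_mul, map_mul,
    RCLike.star_def, RCLike.conj_conj]
  ring

end MeasureTheory.Lp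

lemma volume_torus_eq (n : ℕ) :
    (volume : Measure (Torus n)) = Measure.pi fun _ => AddCircle.haarAddCircle := by
  rw [volume_pi, AddCircle.volume_eq_smul_haarAddCircle]
  simp

lemma charL2_eq_toLp {n : ℕ} (α : Fin n → ℤ) :
    charL2 α = ContinuousMap.toLp (E := ℂ) 2 volume ℂ (mFourier α) :=
  Lp.ext ((char_memLp α 2).coeFn_toLp.trans
    (ContinuousMap.coeFn_toLp (E := ℂ) (p := 2) volume (mFourier α)).symm)

-- Mathlib's `mFourierLp` lives in `L²` of the Haar probability measure, which equals `volume` only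
-- propositionally; generalizing the measure lets us substitute one for the other.
lemma orthonormal_charL2 (n : ℕ) : Orthonormal ℂ (charL2 (n := n)) := by
  have key : ∀ μ : Measure (Torus n), [IsFiniteMeasure μ] →
      μ = Measure.pi (fun _ => AddCircle.haarAddCircle) →
      Orthonormal ℂ (fun α => ContinuousMap.toLp (E := ℂ) 2 μ ℂ (mFourier α)) := by
    rintro μ _ rfl
    exact orthonormal_mFourier
  simpa only [← charL2_eq_toLp] using key volume (volume_torus_eq n)

lemma span_charL2_closure_eq_top (n : ℕ) :
    (span ℂ (range (charL2 (n := n)))).topologicalClosure = ⊤ := by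
  have key : ∀ μ : Measure (Torus n), [IsFiniteMeasure μ] →
      μ = Measure.pi (fun _ => AddCircle.haarAddCircle) →
      (span ℂ (range fun α => ContinuousMap.toLp (E := ℂ) 2 μ ℂ (mFourier α))).topologicalClosure
        = ⊤ := by
    rintro μ _ rfl
    exact span_mFourierLp_closure_eq_top (by simp)
  simpa only [← charL2_eq_toLp] using key volume (volume_torus_eq n)

lemma inner_charL2_smul_charL2 {n : ℕ} (χ : LinfT n) (α β : Fin n → ℤ) :
    inner ℂ (charL2 β) (χ • charL2 α : L2T n) = ∫ x, χ x * char (-(β - α)) x := by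
  rw [Lp.inner_smul_right_eq_integral]
  refine integral_congr_ae ?_
  filter_upwards [(char_memLp α 2).coeFn_toLp, (char_memLp β 2).coeFn_toLp] with x hα hβ
  rw [charL2, charL2, hα, hβ, neg_sub, sub_eq_neg_add]
  change conj (mFourier β x) * (χ x * mFourier α x) = χ x * mFourier (-β + α) x
  rw [mFourier_add, mFourier_neg]
  ring

def hardyIndex (n : ℕ) : Set (Fin n → ℤ) :=
  {α | ∀ k : Fin n, 0 ≤ (∑ j ∈ Finset.Iic k, α j) + (k.val : ℤ)}

lemma hardyT_eq_orthogonal (n : ℕ) : hardyT n = (span ℂ (charL2 '' (hardyIndex n)ᶜ))ᗮ :=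
  (orthonormal_charL2 n).closure_span_image_eq_orthogonal (span_charL2_closure_eq_top n) _

lemma not_forall_sum_Iic_sub_nonneg {n : ℕ} {α β : Fin n → ℤ} (hα : α ∈ hardyIndex n)
    (hβ : β ∉ hardyIndex n) : ¬ ∀ k : Fin n, 0 ≤ ∑ j ∈ Finset.Iic k, (β - α) j := by
  obtain ⟨k, hk⟩ : ∃ k : Fin n, (∑ j ∈ Finset.Iic k, β j) + (k.val : ℤ) < 0 := by
    simpa [hardyIndex] using hβ
  have := hα k
  simp only [Pi.sub_apply, Finset.sum_sub_distrib, not_forall, not_le]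
  exact ⟨k, by linarith⟩

lemma IsAnalyticSymbolF.congr_ae {n : ℕ} {f g : Torus n → ℂ} (hf : IsAnalyticSymbolF f)
    (h : f =ᵐ[volume] g) : IsAnalyticSymbolF g := by
  intro α hα
  rw [← hf α hα]
  refine integral_congr_ae ?_
  filter_upwards [h] with x hx
  rw [hx]

lemma smul_mem_hardyT {n : ℕ} {χ : LinfT n} (hχ : IsAnalyticSymbolF ⇑χ) {u : L2T n}
    (hu : u ∈ hardyT n) : (χ • u : L2T n) ∈ hardyT n := by
  rw [hardyT_eq_orthogonal, mem_orthogonal_span_iff]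
  rintro - ⟨β, hβ, rfl⟩
  rw [Lp.inner_smul_right_eq_inner_star_smul]
  refine inner_left_of_mem_orthogonal hu ?_
  rw [hardyT, orthogonal_closure, mem_orthogonal_span_iff]
  rintro - ⟨α, hα, rfl⟩
  rw [inner_eq_zero_symm, ← Lp.inner_smul_right_eq_inner_star_smul, inner_charL2_smul_charL2]
  exact hχ _ (not_forall_sum_Iic_sub_nonneg hα hβ)

section Toeplitz

variable {n : ℕ} {K : Submodule ℂ (L2T n)}

lemma IsToeplitzOn.inner_apply {χ : LinfT n} {T : K →L[ℂ] K} (hT : IsToeplitzOn K (⇑χ) T)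
    (f g : K) : inner ℂ (g : L2T n) (T f) = inner ℂ (g : L2T n) (χ • (f : L2T n) : L2T n) :=
  (hT f g).trans (Lp.inner_smul_right_eq_integral _ _ _).symm

lemma IsToeplitzOn.inner_apply_mul {φ ψ : LinfT n} {T : K →L[ℂ] K}
    (hT : IsToeplitzOn K (fun x => φ x * ψ x) T) (f g : K) :
    inner ℂ (g : L2T n) (T f) = inner ℂ (g : L2T n) (φ • (ψ • (f : L2T n) : L2T n) : L2T n) := by
  rw [hT f g, Lp.inner_smul_right_eq_integral]
  refine integral_congr_ae ?_
  filter_upwards [Lp.coeFn_lpSMul (r := 2) ψ (f : L2T n)] with x hx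
  rw [hx, Pi.smul_apply', smul_eq_mul, mul_assoc]

lemma IsToeplitzOn.apply_eq_smul {χ : LinfT n} {T : K →L[ℂ] K} (hT : IsToeplitzOn K (⇑χ) T)
    {f : K} (hf : (χ • (f : L2T n) : L2T n) ∈ K) : (T f : L2T n) = χ • (f : L2T n) := by
  suffices T f = ⟨_, hf⟩ from congrArg Subtype.val this
  exact ext_inner_left ℂ fun g => by rw [coe_inner, coe_inner, hT.inner_apply]

theorem IsToeplitzOn.comp_eq_of_smul_mem_right {φ ψ : LinfT n} {Tφ Tψ Tφψ : K →L[ℂ] K}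
    (hψ : ∀ f ∈ K, (ψ • f : L2T n) ∈ K) (hTφ : IsToeplitzOn K (⇑φ) Tφ)
    (hTψ : IsToeplitzOn K (⇑ψ) Tψ) (hTφψ : IsToeplitzOn K (fun x => φ x * ψ x) Tφψ) :
    Tφ.comp Tψ = Tφψ := by
  refine ContinuousLinearMap.ext fun f => ext_inner_left ℂ fun g => ?_
  rw [coe_inner, coe_inner, ContinuousLinearMap.comp_apply, hTφ.inner_apply,
    hTψ.apply_eq_smul (hψ _ f.2), hTφψ.inner_apply_mul]

theorem IsToeplitzOn.comp_eq_of_star_smul_mem_left {φ ψ : LinfT n} {Tφ Tψ Tφψ : K →L[ℂ] K}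
    (hφ : ∀ g ∈ K, (star φ • g : L2T n) ∈ K) (hTφ : IsToeplitzOn K (⇑φ) Tφ)
    (hTψ : IsToeplitzOn K (⇑ψ) Tψ) (hTφψ : IsToeplitzOn K (fun x => φ x * ψ x) Tφψ) :
    Tφ.comp Tψ = Tφψ := by
  refine ContinuousLinearMap.ext fun f => ext_inner_left ℂ fun g => ?_
  rw [coe_inner, coe_inner, ContinuousLinearMap.comp_apply, hTφ.inner_apply,
    hTφψ.inner_apply_mul, Lp.inner_smul_right_eq_inner_star_smul,
    Lp.inner_smul_right_eq_inner_star_smul φ]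
  exact hTψ.inner_apply f ⟨_, hφ _ g.2⟩

end Toeplitz

theorem stmt4 {n : ℕ} (φ ψ : LinfT n)
    (hanalytic : IsAnalyticSymbolF (fun x => conj (φ x)) ∨ IsAnalyticSymbolF (⇑ψ))
    (Tφ Tψ Tφψ : hardyT n →L[ℂ] hardyT n)
    (hTφ : IsToeplitzOn (hardyT n) (⇑φ) Tφ)
    (hTψ : IsToeplitzOn (hardyT n) (⇑ψ) Tψ)
    (hTφψ : IsToeplitzOn (hardyT n) (fun x => φ x * ψ x) Tφψ) :
    Tφ.comp Tψ = Tφψ := by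
  rcases hanalytic with hφ | hψ
  · have hφ' : IsAnalyticSymbolF ⇑(star φ) := hφ.congr_ae (Lp.coeFn_star φ).symm
    exact IsToeplitzOn.comp_eq_of_star_smul_mem_left (fun g hg => smul_mem_hardyT hφ' hg)
      hTφ hTψ hTφψ
  · exact IsToeplitzOn.comp_eq_of_smul_mem_right (fun f hf => smul_mem_hardyT hψ hf)
      hTφ hTψ hTφψ
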